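/- arXiv:2304.02659 — 6 statements merged into one kernel-verified Lean document; each statement's English description precedes it below -/
import Mathlib

section
/- Let A be an m×n matrix of rank r. If B is an r×n submatrix consisting of r linearly independent rows of A, and C is an m×r submatrix consisting of r linearly independent columns of A, then the r×r intersection matrix W (entries of A in those rows and columns) is invertible. -/
theorem stmt4 {K : Type*} [Field K] {m n r : ℕ}
    (A : Matrix (Fin m) (Fin n) K) (hA : A.rank = r)
    (f : Fin r → Fin m) (hf : Function.Injective f)
    (hrows : LinearIndependent K (fun i => A (f i)))
    (g : Fin r → Fin n) (hg : Function.Injective g)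
    (hcols : LinearIndependent K (fun j => fun i => A i (g j))) :
    IsUnit (A.submatrix f g) := by
  classical
  rw [← Matrix.linearIndependent_rows_iff_isUnit]
  rw [Fintype.linearIndependent_iff]
  intro c hc
  set S : Submodule K (Fin m → K) :=
    Submodule.span K (Set.range (fun j => fun i => A i (g j))) with hS
  have hSle : S ≤ LinearMap.range A.mulVecLin := by
    rw [hS, Submodule.span_le]
    rintro _ ⟨j, rfl⟩
    exact ⟨Pi.single (g j) 1, by ext i; simp [Matrix.mulVecLin]⟩
  have hfr : Module.finrank K S = r := by
    rw [hS, finrank_span_eq_card hcols, Fintype.card_fin]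
  have hSeq : S = LinearMap.range A.mulVecLin :=
    Submodule.eq_of_le_of_finrank_eq hSle (by rw [hfr]; exact hA.symm)
  have hcol : ∀ k, (fun i => A i k) ∈ S := by
    intro k
    rw [hSeq]
    exact ⟨Pi.single k 1, by ext i; simp [Matrix.mulVecLin]⟩
  set φ : (Fin m → K) →ₗ[K] K := ∑ i, c i • LinearMap.proj (f i) with hφ
  have hφapp : ∀ w : Fin m → K, φ w = ∑ i, c i * w (f i) := by
    intro w; simp [hφ]
  have hφS : S ≤ LinearMap.ker φ := by
    rw [hS, Submodule.span_le]
    rintro _ ⟨j, rfl⟩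
    have := congr_fun hc j
    simpa [hφapp] using this
  have hv : ∀ k, ∑ i, c i * A (f i) k = 0 := by
    intro k
    have := hφS (hcol k)
    simpa [hφapp] using this
  have hzero : ∑ i, c i • A (f i) = 0 := by
    ext k
    simpa using hv k
  exact Fintype.linearIndependent_iff.mp hrows c hzero
end

section
/- Let A be an m×n matrix of rank r whose top-left r×r block W is invertible, written in block form A = [[W, H], [J, K]]. Then K = J * W⁻¹ * H. -/
open Matrix LinearMap

lemma finrank_submodule_prod {R M N : Type*} [Field R] [AddCommGroup M] [Module R M]
    [AddCommGroup N] [Module R N] [FiniteDimensional R M] [FiniteDimensional R N]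
    (p : Submodule R M) (q : Submodule R N) :
    Module.finrank R (p.prod q) = Module.finrank R p + Module.finrank R q := by
  let e : (p.prod q) ≃ₗ[R] p × q :=
  { toFun := fun x => (⟨x.1.1, x.2.1⟩, ⟨x.1.2, x.2.2⟩)
    invFun := fun y => ⟨(y.1.1, y.2.1), y.1.2, y.2.2⟩
    map_add' := fun _ _ => rfl
    map_smul' := fun _ _ => rfl
    left_inv := fun _ => rfl
    right_inv := fun _ => rfl }
  rw [e.finrank_eq, Module.finrank_prod]

lemma range_prodMap' {R M N M' N' : Type*} [Field R] [AddCommGroup M] [Module R M]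
    [AddCommGroup N] [Module R N] [AddCommGroup M'] [Module R M']
    [AddCommGroup N'] [Module R N'] (f : M →ₗ[R] M') (g : N →ₗ[R] N') :
    LinearMap.range (f.prodMap g) = (LinearMap.range f).prod (LinearMap.range g) := by
  ext x
  simp only [LinearMap.mem_range, Submodule.mem_prod, LinearMap.prodMap_apply, Prod.ext_iff]
  constructor
  · rintro ⟨y, h1, h2⟩; exact ⟨⟨y.1, h1⟩, ⟨y.2, h2⟩⟩
  · rintro ⟨⟨a, ha⟩, ⟨b, hb⟩⟩; exact ⟨(a, b), ha, hb⟩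

lemma rank_fromBlocks_diag {𝕜 : Type*} [Field 𝕜] {a b c d : ℕ}
    (A : Matrix (Fin a) (Fin b) 𝕜) (D : Matrix (Fin c) (Fin d) 𝕜) :
    (Matrix.fromBlocks A 0 0 D).rank = A.rank + D.rank := by
  classical
  let e₁ := LinearEquiv.sumArrowLequivProdArrow (Fin b) (Fin d) 𝕜 𝕜
  let e₂ := LinearEquiv.sumArrowLequivProdArrow (Fin a) (Fin c) 𝕜 𝕜
  have key : (Matrix.fromBlocks A 0 0 D).mulVecLin =
      e₂.symm.toLinearMap ∘ₗ (A.mulVecLin.prodMap D.mulVecLin) ∘ₗ e₁.toLinearMap := by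
    apply LinearMap.ext; intro v
    funext i
    cases i <;>
      simp [e₁, e₂, Matrix.fromBlocks_mulVec, LinearEquiv.sumArrowLequivProdArrow,
        Equiv.sumArrowEquivProdArrow]
  rw [Matrix.rank, Matrix.rank, Matrix.rank, key, LinearMap.range_comp,
    LinearEquiv.finrank_map_eq, LinearMap.range_comp_of_range_eq_top _ e₁.range,
    range_prodMap', finrank_submodule_prod]

lemma matrix_rank_zero_eq_zero {𝕜 : Type*} [Field 𝕜] {c d : ℕ}
    (D : Matrix (Fin c) (Fin d) 𝕜) (h : D.rank = 0) : D = 0 := by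
  have hr : LinearMap.range D.mulVecLin = ⊥ := Submodule.finrank_eq_zero.mp h
  ext i j
  have h0 : D *ᵥ Pi.single j 1 = 0 := by
    have : D.mulVecLin (Pi.single j 1) ∈ (⊥ : Submodule 𝕜 (Fin c → 𝕜)) := by
      rw [← hr]; exact LinearMap.mem_range_self _ _
    simpa using this
  have := congrFun h0 i
  simpa [Matrix.mulVec_single] using this

theorem stmt5 {𝕜 : Type*} [Field 𝕜] {r p q : ℕ}
    (W : Matrix (Fin r) (Fin r) 𝕜) (H : Matrix (Fin r) (Fin q) 𝕜)
    (J : Matrix (Fin p) (Fin r) 𝕜) (K : Matrix (Fin p) (Fin q) 𝕜)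
    (hW : IsUnit W) (hA : (Matrix.fromBlocks W H J K).rank = r) :
    K = J * W⁻¹ * H := by
  classical
  have hdet : IsUnit W.det := (Matrix.isUnit_iff_isUnit_det W).mp hW
  haveI : Invertible W := W.invertibleOfIsUnitDet hdet
  have hfac := Matrix.fromBlocks_eq_of_invertible₁₁ W H J K
  have h1 : (Matrix.fromBlocks W H J K).rank
      = (Matrix.fromBlocks W 0 0 (K - J * ⅟W * H)).rank := by
    rw [hfac, Matrix.rank_mul_eq_left_of_isUnit_det, Matrix.rank_mul_eq_right_of_isUnit_det]
    · simp [Matrix.det_fromBlocks_zero₂₁]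
    · simp [Matrix.det_fromBlocks_zero₁₂]
  rw [h1, rank_fromBlocks_diag, Matrix.rank_of_isUnit W hW, Fintype.card_fin] at hA
  have hS : (K - J * ⅟W * H) = 0 :=
    matrix_rank_zero_eq_zero _ (by omega)
  have : K = J * ⅟W * H := sub_eq_zero.mp hS
  rw [this, Matrix.invOf_eq_nonsing_inv]
end

section
/- Let A = [[W, H], [J, K]] be a block matrix with W an invertible r×r block. Then rank A = r if and only if K = J * W⁻¹ * H. -/
/-!
The Schur-complement factorization writes `fromBlocks W H J K` as the block-diagonal matrix
`fromBlocks W 0 0 (K - J * W⁻¹ * H)` multiplied on both sides by unipotent block-triangular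
matrices, so its rank is `r + rank (K - J * W⁻¹ * H)`; the rank is `r` exactly when this Schur
complement vanishes.
-/

open Matrix

theorem Submodule.finrank_prod {K V W : Type*} [DivisionRing K] [AddCommGroup V] [Module K V]
    [AddCommGroup W] [Module K W] [FiniteDimensional K V] [FiniteDimensional K W]
    (p : Submodule K V) (q : Submodule K W) :
    Module.finrank K (p.prod q) = Module.finrank K p + Module.finrank K q := by
  have hpq : p.prod q = LinearMap.range (p.subtype.prodMap q.subtype) := by
    rw [LinearMap.range_prodMap, Submodule.range_subtype, Submodule.range_subtype]
  rw [hpq, LinearMap.finrank_range_of_inj (p.injective_subtype.prodMap q.injective_subtype),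
    Module.finrank_prod]

namespace Matrix

variable {R : Type*} [Field R] {l m n o : Type*}

theorem rank_eq_zero_iff [Fintype n] (A : Matrix m n R) : A.rank = 0 ↔ A = 0 := by
  classical
  rw [rank, Submodule.finrank_eq_zero, LinearMap.range_eq_bot, ← toLin'_apply',
    LinearEquiv.map_eq_zero_iff]

theorem rank_fromBlocks_zero_zero [Fintype l] [Fintype m] [Fintype n] [Fintype o]
    (A : Matrix l m R) (D : Matrix n o R) :
    (fromBlocks A 0 0 D).rank = A.rank + D.rank := by
  let eRow := LinearEquiv.sumPiEquivProdPi R l n (fun _ => R)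
  let eCol := LinearEquiv.sumPiEquivProdPi R m o (fun _ => R)
  have hsplit : (fromBlocks A 0 0 D).mulVecLin =
      eRow.symm.toLinearMap ∘ₗ A.mulVecLin.prodMap D.mulVecLin ∘ₗ eCol.toLinearMap := by
    ext v (i | i) <;> simp [eRow, eCol, fromBlocks_mulVec, Function.comp_def]
  rw [rank, hsplit, LinearMap.range_comp, LinearMap.range_comp_of_range_eq_top _ eCol.range,
    LinearMap.range_prodMap, LinearEquiv.finrank_map_eq, Submodule.finrank_prod]
  rfl

theorem rank_fromBlocks_of_isUnit [Fintype l] [Fintype m] [Fintype n]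
    [DecidableEq l] [DecidableEq m] [DecidableEq n] {A : Matrix m m R}
    (B : Matrix m n R) (C : Matrix l m R) (D : Matrix l n R) (hA : IsUnit A) :
    (fromBlocks A B C D).rank = Fintype.card m + (D - C * A⁻¹ * B).rank := by
  obtain ⟨_⟩ := hA.nonempty_invertible
  have hL : IsUnit (fromBlocks 1 0 (C * ⅟A) 1 : Matrix (m ⊕ l) (m ⊕ l) R).det := by simp
  have hU : IsUnit (fromBlocks 1 (⅟A * B) 0 1 : Matrix (m ⊕ n) (m ⊕ n) R).det := by simp
  rw [fromBlocks_eq_of_invertible₁₁, rank_mul_eq_left_of_isUnit_det _ _ hU,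
    rank_mul_eq_right_of_isUnit_det _ _ hL, rank_fromBlocks_zero_zero, rank_of_isUnit A hA,
    invOf_eq_nonsing_inv]

end Matrix

theorem stmt6 {𝕜 : Type*} [Field 𝕜] {r p q : ℕ}
    (W : Matrix (Fin r) (Fin r) 𝕜) (H : Matrix (Fin r) (Fin q) 𝕜)
    (J : Matrix (Fin p) (Fin r) 𝕜) (K : Matrix (Fin p) (Fin q) 𝕜)
    (hW : IsUnit W) :
    (Matrix.fromBlocks W H J K).rank = r ↔ K = J * W⁻¹ * H := by
  rw [rank_fromBlocks_of_isUnit H J K hW, Fintype.card_fin, add_eq_left,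
    Matrix.rank_eq_zero_iff, sub_eq_zero]
end

section
/- If A = [[W, H], [J, K]] has rank r with W invertible r×r, then the last p rows of A are obtained from the first r rows by left multiplication by J * W⁻¹: [J K] = (J * W⁻¹) * [W H]. -/
/-!
Since `W` is invertible, the rows of `[W H]` already span a space of dimension `r`, which is
the whole row space of `A`. So `[J K] = C * [W H]` for some `C`; comparing the first block of
columns gives `J = C * W`, i.e. `C = J * W⁻¹`.
-/

open Matrix Module Submodule

namespace Matrix

variable {K : Type*} [Field K]

theorem exists_eq_mul_of_rank_fromRows_eq {m₁ m₂ n : Type*}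
    [Fintype m₁] [Finite m₂] [Fintype n]
    (A₁ : Matrix m₁ n K) (A₂ : Matrix m₂ n K) (h : (fromRows A₁ A₂).rank = A₁.rank) :
    ∃ C : Matrix m₂ m₁ K, A₂ = C * A₁ := by
  have hle : span K (Set.range A₁.row) ≤ span K (Set.range (fromRows A₁ A₂).row) :=
    span_mono <| by rintro _ ⟨i, rfl⟩; exact ⟨Sum.inl i, rfl⟩
  have heq : span K (Set.range A₁.row) = span K (Set.range (fromRows A₁ A₂).row) :=
    eq_of_le_of_finrank_eq hle <| by
      rw [← rank_eq_finrank_span_row, ← rank_eq_finrank_span_row, h]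
  have hmem (i : m₂) : A₂ i ∈ LinearMap.range A₁.vecMulLinear := by
    rw [range_vecMulLinear, heq]
    exact subset_span ⟨Sum.inr i, rfl⟩
  choose C hC using hmem
  exact ⟨C, funext fun i => (hC i).symm⟩

theorem rank_fromCols_of_isUnit {m n : Type*} [Fintype m] [DecidableEq m] [Fintype n]
    {W : Matrix m m K} (hW : IsUnit W) (H : Matrix m n K) :
    (fromCols W H).rank = Fintype.card m :=
  le_antisymm (rank_le_card_height _) <| by
    calc Fintype.card m = W.rank := (rank_of_isUnit W hW).symm
      _ ≤ (fromCols W H).rank := rank_submatrix_le (fromCols W H) id Sum.inl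

end Matrix

theorem stmt7 {𝕜 : Type*} [Field 𝕜] {r p q : ℕ}
    (W : Matrix (Fin r) (Fin r) 𝕜) (H : Matrix (Fin r) (Fin q) 𝕜)
    (J : Matrix (Fin p) (Fin r) 𝕜) (K : Matrix (Fin p) (Fin q) 𝕜)
    (hW : IsUnit W) (hA : (Matrix.fromBlocks W H J K).rank = r) :
    Matrix.fromCols J K = (J * W⁻¹) * Matrix.fromCols W H := by
  obtain ⟨C, hC⟩ := exists_eq_mul_of_rank_fromRows_eq (fromCols W H) (fromCols J K) <| by
    rw [fromRows_fromCols_eq_fromBlocks, hA, rank_fromCols_of_isUnit hW, Fintype.card_fin]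
  obtain ⟨hJ, hK⟩ := fromCols_inj.eq_iff.mp (hC.trans (mul_fromCols C W H))
  rw [hJ, hK, mul_nonsing_inv_cancel_right _ _ ((isUnit_iff_isUnit_det W).mp hW), mul_fromCols]
end

section
/- Let C be an m×r matrix with rank r and F an r×q matrix. Then the matrix X with block rows (-F) on top and the q×q identity below satisfies (C * [I F]) * X = 0, and the columns of X form a basis for the null space of the matrix A = C * (Matrix of blocks [I, F]). -/
/-!
Since `rank C = r`, multiplication by `C` is injective, so `ker A = ker [I F]`. A vector `(x, y)`
lies in `ker [I F]` exactly when `x = -F y`, i.e. when it equals `X y`; and `X` is injective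
because its lower block is the identity.
-/

open Matrix

namespace Matrix

variable {R : Type*} {l m n : Type*}

theorem mulVec_injective_of_rank_eq_card_width [Field R] [Fintype n] {M : Matrix m n R}
    (h : M.rank = Fintype.card n) : Function.Injective M.mulVec := by
  rw [mulVec_injective_iff, linearIndependent_iff_card_eq_finrank_span, Set.finrank,
    ← rank_eq_finrank_span_cols, h]

theorem ker_mulVecLin_mul_of_injective [CommRing R] [Fintype m] [Fintype n] {M : Matrix l m R}
    (hM : Function.Injective M.mulVec) (N : Matrix m n R) :
    LinearMap.ker (M * N).mulVecLin = LinearMap.ker N.mulVecLin := by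
  rw [mulVecLin_mul, LinearMap.ker_comp_of_ker_eq_bot _ (LinearMap.ker_eq_bot.2 hM)]

theorem fromCols_one_mul_fromRows_neg_one [Ring R] [Fintype m] [DecidableEq m] [Fintype n]
    [DecidableEq n] (F : Matrix m n R) :
    fromCols (1 : Matrix m m R) F * fromRows (-F) (1 : Matrix n n R) = 0 := by
  rw [fromCols_mul_fromRows, Matrix.one_mul, Matrix.mul_one, neg_add_cancel]

theorem linearIndependent_col_fromRows_one [CommRing R] [Fintype n] [DecidableEq n]
    (B : Matrix m n R) : LinearIndependent R (fromRows B (1 : Matrix n n R)).col := by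
  rw [← mulVec_injective_iff]
  intro u v huv
  simpa only [fromRows_mulVec, one_mulVec, Sum.elim_comp_inr] using congrArg (· ∘ Sum.inr) huv

theorem ker_fromCols_one_eq_range_fromRows_neg_one [CommRing R] [Fintype m] [DecidableEq m]
    [Fintype n] [DecidableEq n] (F : Matrix m n R) :
    LinearMap.ker (fromCols (1 : Matrix m m R) F).mulVecLin =
      LinearMap.range (fromRows (-F) (1 : Matrix n n R)).mulVecLin := by
  refine le_antisymm ?_ ?_
  · intro x hx
    refine ⟨x ∘ Sum.inr, ?_⟩
    have hx : x ∘ Sum.inl + F *ᵥ x ∘ Sum.inr = 0 := by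
      simpa only [LinearMap.mem_ker, mulVecLin_apply, fromCols_mulVec, one_mulVec] using hx
    ext (i | i)
    · simp [neg_mulVec, ← eq_neg_of_add_eq_zero_left hx]
    · simp
  · rw [LinearMap.range_le_ker_iff, ← mulVecLin_mul, fromCols_one_mul_fromRows_neg_one,
      mulVecLin_zero]

end Matrix

theorem stmt8 {𝕜 : Type*} [Field 𝕜] {m r q : ℕ}
    (C : Matrix (Fin m) (Fin r) 𝕜) (hC : C.rank = r)
    (F : Matrix (Fin r) (Fin q) 𝕜)
    (A : Matrix (Fin m) (Fin r ⊕ Fin q) 𝕜)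
    (hA : A = C * Matrix.fromCols 1 F)
    (X : Matrix (Fin r ⊕ Fin q) (Fin q) 𝕜)
    (hX : X = Matrix.fromRows (-F) 1) :
    A * X = 0 ∧
    LinearIndependent 𝕜 (fun j => fun i => X i j) ∧
    Submodule.span 𝕜 (Set.range (fun j => fun i => X i j)) =
      LinearMap.ker A.mulVecLin := by
  subst hA hX
  have hCinj : Function.Injective C.mulVec :=
    mulVec_injective_of_rank_eq_card_width (hC.trans (Fintype.card_fin r).symm)
  refine ⟨?_, linearIndependent_col_fromRows_one (-F), ?_⟩
  · rw [Matrix.mul_assoc, fromCols_one_mul_fromRows_neg_one, Matrix.mul_zero]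
  · rw [ker_mulVecLin_mul_of_injective hCinj, ker_fromCols_one_eq_range_fromRows_neg_one,
      range_mulVecLin]
    rfl
end

section
/- If W is an invertible r×r matrix and A = fromBlocks W H J K has rank r, then fromBlocks 1 (W⁻¹*H) 0 0 can be obtained from A by left multiplication by an invertible matrix; i.e., there exists an invertible (r+p)×(r+p) matrix E with E * A = fromBlocks 1 (W⁻¹ * H) 0 0. -/
open Matrix

noncomputable def elimL {𝕜 : Type*} [Field 𝕜] {r q : ℕ} : (Fin r → 𝕜) →ₗ[𝕜] (Fin r ⊕ Fin q → 𝕜) where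
  toFun x := Sum.elim x 0
  map_add' x y := by funext i; cases i <;> simp
  map_smul' c x := by funext i; cases i <;> simp

theorem aux_schur_zero {𝕜 : Type*} [Field 𝕜] {r p q : ℕ}
    (C : Matrix (Fin r) (Fin q) 𝕜) (S : Matrix (Fin p) (Fin q) 𝕜)
    (h : (Matrix.fromBlocks (1 : Matrix (Fin r) (Fin r) 𝕜) C 0 S).rank = r) : S = 0 := by
  set B := Matrix.fromBlocks (1 : Matrix (Fin r) (Fin r) 𝕜) C 0 S with hB
  set f : ↥(LinearMap.range (B.mulVecLin)) →ₗ[𝕜] (Fin p → 𝕜) :=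
    (LinearMap.funLeft 𝕜 𝕜 Sum.inr) ∘ₗ (LinearMap.range (B.mulVecLin)).subtype with hf
  have hrange : LinearMap.range f = LinearMap.range S.mulVecLin := by
    apply le_antisymm
    · rintro _ ⟨⟨_, v, rfl⟩, rfl⟩
      refine ⟨v ∘ Sum.inr, ?_⟩
      ext i
      simp [hf, hB, Matrix.mulVecLin, Matrix.mulVec, Matrix.fromBlocks, dotProduct,
        Fintype.sum_sum_type]
    · rintro _ ⟨y, rfl⟩
      refine ⟨⟨B *ᵥ (Sum.elim 0 y), ⟨Sum.elim 0 y, rfl⟩⟩, ?_⟩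
      ext i
      simp [hf, hB, Matrix.fromBlocks_mulVec]
  have hker : r ≤ Module.finrank 𝕜 (LinearMap.ker f) := by
    set g : (Fin r → 𝕜) →ₗ[𝕜] ↥(LinearMap.range B.mulVecLin) :=
      LinearMap.codRestrict _ (B.mulVecLin ∘ₗ elimL)
        (fun x => LinearMap.mem_range_self _ _) with hg
    have hgker : LinearMap.range g ≤ LinearMap.ker f := by
      rintro _ ⟨x, rfl⟩
      have : f (g x) = 0 := by
        ext i
        simp [hf, hg, hB, elimL, Matrix.fromBlocks_mulVec]
      simpa [LinearMap.mem_ker] using this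
    have hginj : Function.Injective g := by
      intro x y hxy
      funext i
      have := congrArg (fun v : ↥(LinearMap.range B.mulVecLin) => (v : Fin r ⊕ Fin p → 𝕜) (Sum.inl i)) hxy
      simpa [hg, hB, elimL, Matrix.fromBlocks_mulVec] using this
    calc r = Module.finrank 𝕜 (Fin r → 𝕜) := by simp
    _ = Module.finrank 𝕜 (LinearMap.range g) := (LinearMap.finrank_range_of_inj hginj).symm
    _ ≤ Module.finrank 𝕜 (LinearMap.ker f) := Submodule.finrank_mono hgker
  have hrn := LinearMap.finrank_range_add_finrank_ker f
  rw [hrange] at hrn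
  have hBr : Module.finrank 𝕜 ↥(LinearMap.range B.mulVecLin) = r := h
  have hSr : Module.finrank 𝕜 ↥(LinearMap.range S.mulVecLin) = S.rank := rfl
  rw [hSr, hBr] at hrn
  have hS0 : S.rank = 0 := by omega
  have hbot : LinearMap.range S.mulVecLin = ⊥ := Submodule.finrank_eq_zero.mp hS0
  have hz : S.mulVecLin = 0 := by
    rw [← LinearMap.range_eq_bot]; exact hbot
  ext i j
  have := congrArg (fun g => g (Pi.single j 1) i) hz
  simpa [Matrix.mulVec_single] using this


theorem stmt18 {𝕜 : Type*} [Field 𝕜] {r p q : ℕ}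
    (W : Matrix (Fin r) (Fin r) 𝕜) (H : Matrix (Fin r) (Fin q) 𝕜)
    (J : Matrix (Fin p) (Fin r) 𝕜) (K : Matrix (Fin p) (Fin q) 𝕜)
    (hW : IsUnit W) (hA : (Matrix.fromBlocks W H J K).rank = r) :
    ∃ E : Matrix (Fin r ⊕ Fin p) (Fin r ⊕ Fin p) 𝕜, IsUnit E ∧
      E * Matrix.fromBlocks W H J K = Matrix.fromBlocks 1 (W⁻¹ * H) 0 0 := by
  have hWd : IsUnit W.det := (Matrix.isUnit_iff_isUnit_det W).mp hW
  set E : Matrix (Fin r ⊕ Fin p) (Fin r ⊕ Fin p) 𝕜 :=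
    Matrix.fromBlocks W⁻¹ 0 (-(J * W⁻¹)) 1 with hE
  have hEdet : IsUnit E.det := by
    rw [hE, Matrix.det_fromBlocks_zero₁₂, Matrix.det_one, mul_one]
    exact Matrix.isUnit_nonsing_inv_det_iff.mpr hWd
  have hmul : E * Matrix.fromBlocks W H J K =
      Matrix.fromBlocks 1 (W⁻¹ * H) 0 (-(J * W⁻¹) * H + K) := by
    rw [hE, Matrix.fromBlocks_multiply]
    simp [Matrix.nonsing_inv_mul W hWd, Matrix.mul_assoc, Matrix.neg_mul]
  have hrank : (Matrix.fromBlocks (1 : Matrix (Fin r) (Fin r) 𝕜) (W⁻¹ * H) 0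
      (-(J * W⁻¹) * H + K)).rank = r := by
    rw [← hmul, Matrix.rank_mul_eq_right_of_isUnit_det _ _ hEdet, hA]
  have hS := aux_schur_zero (W⁻¹ * H) (-(J * W⁻¹) * H + K) hrank
  exact ⟨E, (Matrix.isUnit_iff_isUnit_det E).mpr hEdet, by rw [hmul, hS]⟩
end
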